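/- The language { aᵏ # u | u ∈ {b,c}*, k = |{ i | 1 ≤ i ≤ |u| − n, u[i] ≠ u[i+n] }| } is accepted by a deterministic two-way Parikh automaton with O(n) states, dimension 1, and acceptance constraint {0}. -/

import Mathlib

/-- Two-way finite automaton; `Sum.inr false` is the left delimiter ⊢,
`Sum.inr true` is the right delimiter ⊣. -/
structure TwoWayFA (σ : Type) (Q : Type) where
  /-- reading direction of each state: `true` = right-reading -/
  isRight : Q → Bool
  init : Set Q
  acc : Set Q
  trans : Q → (σ ⊕ Bool) → Q → Prop

namespace TwoWayFA

variable {σ Q : Type}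

/-- The letter of ⊢w⊣ at index `i` (0-based). -/
def readAt (w : List σ) (i : ℕ) : Option (σ ⊕ Bool) :=
  if i = 0 then some (Sum.inr false)
  else if i = w.length + 1 then some (Sum.inr true)
  else (w[i - 1]?).map Sum.inl

/-- Index of the letter read from configuration `c = (state, head position)`,
where the head position counts the letters of ⊢w⊣ to the left of the head. -/
def readIdx (A : TwoWayFA σ Q) (c : Q × ℕ) : ℕ :=
  if A.isRight c.1 then c.2 else c.2 - 1

def step (A : TwoWayFA σ Q) (w : List σ) (c c' : Q × ℕ) : Prop :=
  ∃ a, readAt w (A.readIdx c) = some a ∧ A.trans c.1 a c'.1 ∧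
    (if A.isRight c.1 then c'.2 = c.2 + 1 else c.2 ≠ 0 ∧ c'.2 = c.2 - 1)

def IsRun (A : TwoWayFA σ Q) (w : List σ) (ρ : List (Q × ℕ)) : Prop :=
  ρ ≠ [] ∧ ρ.Chain' (A.step w)

/-- An accepting run starts at the left end of ⊢w⊣ in an initial state and
halts past the right delimiter in an accepting state. -/
def IsAccRun (A : TwoWayFA σ Q) (w : List σ) (ρ : List (Q × ℕ)) : Prop :=
  A.IsRun w ρ ∧ (∃ q ∈ A.init, ρ.head? = some (q, 0)) ∧
    (∃ q ∈ A.acc, ρ.getLast? = some (q, w.length + 2))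

def lang (A : TwoWayFA σ Q) : Set (List σ) := {w | ∃ ρ, A.IsAccRun w ρ}

def Deterministic (A : TwoWayFA σ Q) : Prop :=
  A.init.Subsingleton ∧ ∀ q a q₁ q₂, A.trans q a q₁ → A.trans q a q₂ → q₁ = q₂

def OneWay (A : TwoWayFA σ Q) : Prop := ∀ q, A.isRight q = true

def Unambiguous (A : TwoWayFA σ Q) : Prop :=
  ∀ w ρ₁ ρ₂, A.IsAccRun w ρ₁ → A.IsAccRun w ρ₂ → ρ₁ = ρ₂

end TwoWayFA

/-- Number of visits of run `ρ` to input position `p`. -/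
def visits {Q : Type} (ρ : List (Q × ℕ)) (p : ℕ) : ℕ :=
  (ρ.filter fun c => c.2 == p).length

/-- A run is `k`-visit if it visits every input position at most `k` times. -/
def KVisit {Q : Type} (k : ℕ) (ρ : List (Q × ℕ)) : Prop := ∀ p, visits ρ p ≤ k

/-- `A` is `k`-visit: every accepting run visits each position at most `k` times. -/
def TwoWayFA.IsKVisit {σ Q : Type} (A : TwoWayFA σ Q) (k : ℕ) : Prop :=
  ∀ w ρ, A.IsAccRun w ρ → KVisit k ρ

/-- Weight of a step (a pair of consecutive configurations) of a Parikh automaton. -/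
def stepWeight {σ Q : Type} (A : TwoWayFA σ Q) {d : ℕ}
    (lam : Q → (σ ⊕ Bool) → Q → (Fin d → ℤ)) (w : List σ)
    (cc : (Q × ℕ) × (Q × ℕ)) : Fin d → ℤ :=
  match TwoWayFA.readAt w (A.readIdx cc.1) with
  | some a => lam cc.1.1 a cc.2.1
  | none => 0

/-- Value of a run of a Parikh automaton: the sum of the weight vectors of its steps. -/
def runVal {σ Q : Type} (A : TwoWayFA σ Q) {d : ℕ}
    (lam : Q → (σ ⊕ Bool) → Q → (Fin d → ℤ)) (w : List σ) (ρ : List (Q × ℕ)) :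
    Fin d → ℤ :=
  ((ρ.zip ρ.tail).map (stepWeight A lam w)).sum

/-- Language of a two-way Parikh automaton `(A, lam, S)` with semi-linear constraint `S`. -/
def paLang {σ Q : Type} (A : TwoWayFA σ Q) {d : ℕ}
    (lam : Q → (σ ⊕ Bool) → Q → (Fin d → ℤ)) (S : Set (Fin d → ℤ)) : Set (List σ) :=
  {w | ∃ ρ, A.IsAccRun w ρ ∧ runVal A lam w ρ ∈ S}

/-- The alphabet {a, b, c, #}. -/
inductive ABCH : Type
  | a | b | c | hash
deriving DecidableEq

/-- The number of positions `i` (0-based) with `i + n < |u|` and `u[i] ≠ u[i+n]`. -/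
def mismatches (n : ℕ) (u : List ABCH) : ℕ :=
  ((Finset.range (u.length - n)).filter fun i => u[i]? ≠ u[i + n]?).card

/-- The language L_n = { a^k # u | u ∈ {b,c}*, k = #mismatches at distance n }. -/
def Ln (n : ℕ) : Set (List ABCH) :=
  {w | ∃ (k : ℕ) (u : List ABCH), (∀ x ∈ u, x = ABCH.b ∨ x = ABCH.c) ∧
    w = List.replicate k ABCH.a ++ ABCH.hash :: u ∧ k = mismatches n u}


/-!
The automaton adds `1` for every `a` before `#`. Then, for each position `i` of `u`, it reads
`u[i]`, carries it `n` letters to the right, adds `-1` if `u[i+n]` differs, and walks back to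
position `i + 1`. When the walk to the right hits the right end marker, no pair `(i, i + n)`
remains and the automaton accepts. So on `aᵏ # u` with `u ∈ {b,c}*` the run has value
`k - mismatches n u`. Conversely, every state expects a particular shape for the rest of the input,
and this shape is preserved backwards along every run. Hence only words `aᵏ # u` are accepted, and
by determinism the value of the accepting run is the one computed above.
-/

namespace TwoWayFA

variable {σ Q : Type}

def tape (w : List σ) : List (σ ⊕ Bool) :=
  Sum.inr false :: w.map Sum.inl ++ [Sum.inr true]

theorem readAt_eq_getElem?_tape (w : List σ) (i : ℕ) : readAt w i = (tape w)[i]? := by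
  rcases i with _ | i
  · simp [readAt, tape]
  · simp only [readAt, tape, List.getElem?_cons_succ, List.getElem?_append, List.getElem?_map]
    split_ifs <;> simp_all; omega

theorem readAt_add_of_drop_tape {w v : List σ} {p i : ℕ}
    (hv : (tape w).drop p = v.map Sum.inl ++ [Sum.inr true]) (hi : i < v.length) :
    readAt w (p + i) = some (Sum.inl v[i]) := by
  rw [readAt_eq_getElem?_tape, ← List.getElem?_drop, hv, List.getElem?_append_left (by simpa)]
  simp

theorem readAt_add_length_of_drop_tape {w v : List σ} {p : ℕ}
    (hv : (tape w).drop p = v.map Sum.inl ++ [Sum.inr true]) :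
    readAt w (p + v.length) = some (Sum.inr true) := by
  rw [readAt_eq_getElem?_tape, ← List.getElem?_drop, hv, List.getElem?_append_right (by simp)]
  simp

theorem eq_zero_of_readAt_eq_inr_false {w : List σ} {i : ℕ}
    (h : readAt w i = some (Sum.inr false)) : i = 0 := by
  unfold readAt at h; split_ifs at h <;> simp_all

theorem eq_length_add_one_of_readAt_eq_inr_true {w : List σ} {i : ℕ}
    (h : readAt w i = some (Sum.inr true)) : i = w.length + 1 := by
  unfold readAt at h; split_ifs at h <;> simp_all

theorem drop_pred_eq_cons_of_readAt_eq_inl {w : List σ} {i : ℕ} {x : σ}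
    (h : readAt w i = some (Sum.inl x)) : w.drop (i - 1) = x :: w.drop i := by
  rcases i with _ | i
  · simp [readAt] at h
  · have hx : w[i]? = some x := by unfold readAt at h; split_ifs at h <;> simp_all
    obtain ⟨hi, rfl⟩ := List.getElem?_eq_some_iff.mp hx
    exact List.drop_eq_getElem_cons hi

variable {d : ℕ} (A : TwoWayFA σ Q) (lam : Q → (σ ⊕ Bool) → Q → (Fin d → ℤ))
  (w : List σ)

inductive Reaches : Q × ℕ → (Fin d → ℤ) → Q × ℕ → Prop
  | refl (c : Q × ℕ) : Reaches c 0 c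
  | head {c c' c'' : Q × ℕ} {v : Fin d → ℤ} :
      A.step w c c' → Reaches c' v c'' → Reaches c (stepWeight A lam w (c, c') + v) c''

variable {A lam w}

theorem Reaches.trans {c c' c'' : Q × ℕ} {v v' : Fin d → ℤ}
    (h : A.Reaches lam w c v c') (h' : A.Reaches lam w c' v' c'') :
    A.Reaches lam w c (v + v') c'' := by
  induction h with
  | refl => simpa using h'
  | head hs _ ih => simpa [add_assoc] using Reaches.head hs (ih h')

theorem reaches_step_right {q q' : Q} {m : ℕ} {a : σ ⊕ Bool} (hq : A.isRight q = true)
    (hr : readAt w m = some a) (ht : A.trans q a q') :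
    A.Reaches lam w (q, m) (lam q a q') (q', m + 1) := by
  have hr' : readAt w (A.readIdx (q, m)) = some a := by simpa [readIdx, hq] using hr
  simpa [stepWeight, hr'] using
    Reaches.head (lam := lam) ⟨a, hr', ht, by simp [hq]⟩ (Reaches.refl (q', m + 1))

theorem reaches_step_left {q q' : Q} {m : ℕ} {a : σ ⊕ Bool} (hq : A.isRight q = false)
    (hr : readAt w m = some a) (ht : A.trans q a q') :
    A.Reaches lam w (q, m + 1) (lam q a q') (q', m) := by
  have hr' : readAt w (A.readIdx (q, m + 1)) = some a := by simpa [readIdx, hq] using hr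
  simpa [stepWeight, hr'] using
    Reaches.head (lam := lam) ⟨a, hr', ht, by simp [hq]⟩ (Reaches.refl (q', m))

theorem runVal_cons_cons (c c' : Q × ℕ) (ρ : List (Q × ℕ)) :
    runVal A lam w (c :: c' :: ρ) = stepWeight A lam w (c, c') + runVal A lam w (c' :: ρ) := by
  simp [runVal]

theorem reaches_iff_exists_run {c c' : Q × ℕ} {v : Fin d → ℤ} :
    A.Reaches lam w c v c' ↔ ∃ ρ : List (Q × ℕ), ρ.IsChain (A.step w) ∧
      ρ.head? = some c ∧ ρ.getLast? = some c' ∧ runVal A lam w ρ = v := by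
  constructor
  · intro h
    induction h with
    | refl c => exact ⟨[c], .singleton c, rfl, rfl, by simp [runVal]⟩
    | @head c c₁ _ _ hs _ ih =>
      obtain ⟨ρ, hρ, hhead, hlast, rfl⟩ := ih
      obtain ⟨ρ, rfl⟩ : ∃ ρ', ρ = c₁ :: ρ' := by
        cases ρ <;> simp_all
      refine ⟨c :: c₁ :: ρ, .cons_cons hs hρ, rfl, ?_, runVal_cons_cons ..⟩
      simpa [List.getLast?_cons_cons] using hlast
  · rintro ⟨ρ, hρ, hhead, hlast, rfl⟩
    induction ρ generalizing c with
    | nil => simp at hhead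
    | cons c₀ ρ ih =>
      obtain rfl : c₀ = c := by simpa using hhead
      cases ρ with
      | nil =>
        obtain rfl : c₀ = c' := by simpa using hlast
        simpa [runVal] using Reaches.refl (A := A) (lam := lam) (w := w) c₀
      | cons c₁ ρ =>
        rw [runVal_cons_cons]
        exact .head (List.rel_of_isChain_cons_cons hρ)
          (ih (List.isChain_of_isChain_cons hρ) rfl (by simpa using hlast))

theorem mem_paLang_iff {S : Set (Fin d → ℤ)} :
    w ∈ paLang A lam S ↔ ∃ q ∈ A.init, ∃ q' ∈ A.acc, ∃ v ∈ S,
      A.Reaches lam w (q, 0) v (q', w.length + 2) := by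
  simp only [paLang, IsAccRun, IsRun, Set.mem_ofPred_eq, reaches_iff_exists_run]
  constructor
  · rintro ⟨ρ, ⟨⟨-, hρ⟩, ⟨q, hq, hhead⟩, ⟨q', hq', hlast⟩⟩, hv⟩
    exact ⟨q, hq, q', hq', _, hv, ρ, hρ, hhead, hlast, rfl⟩
  · rintro ⟨q, hq, q', hq', _, hv, ρ, hρ, hhead, hlast, rfl⟩
    have hne : ρ ≠ [] := by rintro rfl; simp at hhead
    exact ⟨ρ, ⟨⟨hne, hρ⟩, ⟨q, hq, hhead⟩, ⟨q', hq', hlast⟩⟩, hv⟩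

theorem Deterministic.step_unique (hA : A.Deterministic) {c c₁ c₂ : Q × ℕ}
    (h₁ : A.step w c c₁) (h₂ : A.step w c c₂) : c₁ = c₂ := by
  obtain ⟨a₁, hr₁, ht₁, hm₁⟩ := h₁
  obtain ⟨a₂, hr₂, ht₂, hm₂⟩ := h₂
  obtain rfl : a₁ = a₂ := Option.some_injective _ (hr₁.symm.trans hr₂)
  refine Prod.ext (hA.2 _ _ _ _ ht₁ ht₂) ?_
  split_ifs at hm₁ hm₂ <;> omega

theorem Deterministic.reaches_value_unique (hA : A.Deterministic) {c c₁ c₂ : Q × ℕ}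
    {v₁ v₂ : Fin d → ℤ} (h₁ : A.Reaches lam w c v₁ c₁)
    (h₂ : A.Reaches lam w c v₂ c₂) (hc₁ : ∀ c', ¬ A.step w c₁ c')
    (hc₂ : ∀ c', ¬ A.step w c₂ c') : v₁ = v₂ := by
  induction h₁ generalizing v₂ with
  | refl =>
    cases h₂ with
    | refl => rfl
    | head hs _ => exact absurd hs (hc₁ _)
  | head hs _ ih =>
    cases h₂ with
    | refl => exact absurd hs (hc₂ _)
    | head hs' h' =>
      obtain rfl := hA.step_unique hs hs'
      rw [ih h' hc₁]

theorem readIdx_le_of_step {c c' : Q × ℕ} (h : A.step w c c') :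
    A.readIdx c' ≤ A.readIdx c + 1 := by
  obtain ⟨-, -, -, hm⟩ := h
  unfold readIdx
  split_ifs at * <;> omega

end TwoWayFA

theorem mismatches_cons_of_le {n : ℕ} {x : ABCH} {v : List ABCH} (h : n ≤ v.length) :
    mismatches n (x :: v) = mismatches n v + if (x :: v)[n]? = some x then 0 else 1 := by
  have hlen : (x :: v).length - n = v.length - n + 1 := by simp; omega
  simp only [mismatches, hlen, Finset.card_filter, Finset.sum_range_succ', zero_add,
    List.getElem?_cons_zero, List.getElem?_cons_succ, Nat.add_right_comm _ 1 n]
  by_cases hx : (x :: v)[n]? = some x <;> simp [hx, eq_comm (a := some x)]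

theorem mismatches_eq_zero_of_length_le {n : ℕ} {u : List ABCH} (h : u.length ≤ n) :
    mismatches n u = 0 := by
  simp [mismatches, Nat.sub_eq_zero_of_le h]

namespace LnAutomaton

open TwoWayFA

instance : Fintype ABCH :=
  ⟨⟨↑[ABCH.a, ABCH.b, ABCH.c, ABCH.hash], by decide⟩, fun x => by cases x <;> decide⟩

abbrev IsBC (x : ABCH) : Prop := x = .b ∨ x = .c

/-- `rgt x j`: carrying the scanned letter `x`, the letter to compare it with is `j` positions
right of the head. `lft j`: `j + 1` more left moves bring the head back to the letter after `x`. -/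
inductive State (n : ℕ) : Type
  | init | countA | scan | fin
  | rgt (x : ABCH) (j : Fin n)
  | lft (j : Fin n)

variable {n : ℕ} {w : List ABCH}

def State.encode : State n → Fin 4 ⊕ (ABCH × Fin n) ⊕ Fin n
  | .init => .inl 0
  | .countA => .inl 1
  | .scan => .inl 2
  | .fin => .inl 3
  | .rgt x j => .inr (.inl (x, j))
  | .lft j => .inr (.inr j)

theorem State.encode_injective : Function.Injective (State.encode (n := n)) := by
  intro s t h
  cases s <;> cases t <;> simp_all [State.encode]

noncomputable instance : Fintype (State n) := Fintype.ofInjective _ State.encode_injective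

theorem State.card_le : Fintype.card (State n) ≤ 5 * (n + 1) := by
  have := Fintype.card_le_of_injective _ (State.encode_injective (n := n))
  have hABCH : Fintype.card ABCH = 4 := by decide
  simp only [Fintype.card_sum, Fintype.card_prod, Fintype.card_fin, hABCH] at this
  omega

variable (n) in
def next : State n → ABCH ⊕ Bool → Option (State n)
  | .init, .inr false => some .countA
  | .countA, .inl .a => some .countA
  | .countA, .inl .hash => some .scan
  | .scan, .inr true => some .fin
  | .rgt _ _, .inr true => some .fin
  | .scan, .inl x => if IsBC x then some (if h : 0 < n then .rgt x ⟨n - 1, by omega⟩ else .scan)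
      else none
  | .rgt _ ⟨0, _⟩, .inl y => if IsBC y then some (.lft ⟨n - 1, by omega⟩) else none
  | .rgt x ⟨j + 1, _⟩, .inl y => if IsBC y then some (.rgt x ⟨j, by omega⟩) else none
  | .lft ⟨0, _⟩, .inl y => if IsBC y then some .scan else none
  | .lft ⟨j + 1, _⟩, .inl y => if IsBC y then some (.lft ⟨j, by omega⟩) else none
  | _, _ => none

variable (n) in
def weight : State n → ABCH ⊕ Bool → ℤ
  | .countA, .inl .a => 1
  | .rgt x j, .inl y => if j.val = 0 ∧ y ≠ x then -1 else 0
  | _, _ => 0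

variable (n) in
def automaton : TwoWayFA ABCH (State n) where
  isRight
    | .lft _ => false
    | _ => true
  init := {.init}
  acc := {.fin}
  trans q a q' := next n q a = some q'

-- an integer casts into `Fin 1 → ℤ` as a constant vector
variable (n) in
def lam (q : State n) (a : ABCH ⊕ Bool) (_ : State n) : Fin 1 → ℤ := (weight n q a : ℤ)

theorem automaton_deterministic : (automaton n).Deterministic :=
  ⟨Set.subsingleton_singleton, fun _ _ _ _ h₁ h₂ =>
    Option.some_injective _ (h₁.symm.trans h₂)⟩

theorem not_step_fin {m : ℕ} (c : State n × ℕ) :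
    ¬ (automaton n).step w (.fin, m) c := by
  rintro ⟨a, -, h, -⟩
  rcases a with (_ | _ | _ | _) | (_ | _) <;> cases h

def BCAt (w : List ABCH) (i : ℕ) : Prop := ∃ y, IsBC y ∧ readAt w i = some (.inl y)

theorem reaches_countA (t : ℕ) {q : ℕ} (ha : ∀ i < t, readAt w (q + i) = some (.inl .a)) :
    (automaton n).Reaches (lam n) w (.countA, q) ((t : ℤ) : Fin 1 → ℤ) (.countA, q + t) := by
  induction t generalizing q with
  | zero => simpa using Reaches.refl _
  | succ t ih =>
    have hstep := reaches_step_right (A := automaton n) (lam := lam n) (q := .countA)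
      (q' := .countA) (a := .inl .a) rfl (by simpa using ha 0 (by omega)) rfl
    have hrest := ih (q := q + 1) fun i hi => by
      simpa [add_assoc, add_comm 1] using ha (1 + i) (by omega)
    convert hstep.trans hrest using 2
    · push_cast [lam, weight]; ring
    · omega

theorem reaches_rgt_walk {x : ABCH} (t : ℕ) {j j' : Fin n} (hj : j.val = j'.val + t) {q : ℕ}
    (hbc : ∀ i < t, BCAt w (q + i)) :
    (automaton n).Reaches (lam n) w (.rgt x j, q) 0 (.rgt x j', q + t) := by
  induction t generalizing j q with
  | zero => obtain rfl := Fin.ext hj; exact Reaches.refl _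
  | succ t ih =>
    obtain ⟨y, hy, hr⟩ : BCAt w q := by simpa using hbc 0 (by omega)
    obtain ⟨_ | j, hjn⟩ := j
    · simp at hj
    have hstep := reaches_step_right (A := automaton n) (lam := lam n)
      (q := .rgt x ⟨j + 1, hjn⟩) (q' := .rgt x ⟨j, by omega⟩) rfl hr
      (by simp [automaton, next, hy])
    have hrest := ih (j := ⟨j, by omega⟩) (q := q + 1) (by simp at hj ⊢; omega)
      fun i hi => by simpa [add_assoc, add_comm 1] using hbc (1 + i) (by omega)
    convert hstep.trans hrest using 2
    · simp [lam, weight]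
    · omega

theorem reaches_lft_walk (j : Fin n) {q : ℕ} (hbc : ∀ i ≤ j.val, BCAt w (q + i)) :
    (automaton n).Reaches (lam n) w (.lft j, q + j + 1) 0 (.scan, q) := by
  obtain ⟨t, ht⟩ := j
  induction t with
  | zero =>
    obtain ⟨y, hy, hr⟩ := hbc 0 le_rfl
    simpa [lam, weight] using reaches_step_left (A := automaton n) (lam := lam n)
      (q := .lft ⟨0, ht⟩) (q' := .scan) rfl hr (by simp [automaton, next, hy])
  | succ t ih =>
    obtain ⟨y, hy, hr⟩ := hbc (t + 1) le_rfl
    have hstep := reaches_step_left (A := automaton n) (lam := lam n) (q := .lft ⟨t + 1, ht⟩)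
      (q' := .lft ⟨t, by omega⟩) rfl hr (by simp [automaton, next, hy])
    have hrest := ih (by omega) fun i hi => hbc i (by simp at hi ⊢; omega)
    simpa [lam, weight, add_assoc] using hstep.trans hrest

theorem reaches_scan_scan {p : ℕ} {x y : ABCH} (hx : readAt w p = some (.inl x))
    (hy : readAt w (p + n) = some (.inl y)) (hbc : ∀ i ≤ n, BCAt w (p + i)) :
    (automaton n).Reaches (lam n) w (.scan, p) ((if y = x then 0 else -1 : ℤ) : Fin 1 → ℤ)
      (.scan, p + 1) := by
  obtain ⟨x', hx', hr⟩ : BCAt w p := by simpa using hbc 0 (Nat.zero_le _)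
  obtain rfl : x = x' := by simpa [hx] using hr
  rcases n with _ | n
  · obtain rfl : x = y := by simpa [hx] using hy
    simpa [lam, weight] using reaches_step_right (A := automaton 0) (lam := lam 0) (q := .scan)
      (q' := .scan) rfl hx (by simp [automaton, next, hx'])
  have hscan := reaches_step_right (A := automaton (n + 1)) (lam := lam (n + 1)) (q := .scan)
    (q' := .rgt x ⟨n, by omega⟩) rfl hx (by simp [automaton, next, hx'])
  have hrgt := reaches_rgt_walk (n := n + 1) (x := x) n (j := ⟨n, by omega⟩)
    (j' := ⟨0, by omega⟩) (q := p + 1) (by simp)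
    fun i hi => by simpa [add_assoc, add_comm 1] using hbc (1 + i) (by omega)
  obtain ⟨y', hy', hr'⟩ := hbc (n + 1) le_rfl
  obtain rfl : y = y' := by simpa [hy] using hr'
  have hcmp := reaches_step_right (A := automaton (n + 1)) (lam := lam (n + 1))
    (q := .rgt x ⟨0, by omega⟩) (q' := .lft ⟨n, by omega⟩) (m := p + 1 + n) (a := .inl y)
    rfl (by simpa [add_assoc, add_comm 1] using hy) (by exact if_pos hy')
  have hlft := reaches_lft_walk (w := w) (⟨n, by omega⟩ : Fin (n + 1)) (q := p + 1)
    fun i hi => by simpa [add_assoc, add_comm 1] using hbc (1 + i) (by simp at hi; omega)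
  simpa [lam, weight] using hscan.trans (hrgt.trans (hcmp.trans hlft))

theorem reaches_scan_fin_of_lt {p t : ℕ} (ht : t < n) (hbc : ∀ i ≤ t, BCAt w (p + i))
    (hend : readAt w (p + 1 + t) = some (.inr true)) :
    (automaton n).Reaches (lam n) w (.scan, p) 0 (.fin, p + 1 + t + 1) := by
  obtain ⟨x, hx, hr⟩ : BCAt w p := by simpa using hbc 0 (Nat.zero_le _)
  obtain ⟨n, rfl⟩ : ∃ m, n = m + 1 := ⟨n - 1, by omega⟩
  have hscan := reaches_step_right (A := automaton (n + 1)) (lam := lam (n + 1)) (q := .scan)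
    (q' := .rgt x ⟨n, by omega⟩) rfl hr (by simp [automaton, next, hx])
  have hrgt := reaches_rgt_walk (n := n + 1) (x := x) t (j := ⟨n, by omega⟩)
    (j' := ⟨n - t, by omega⟩) (q := p + 1) (by simp; omega)
    fun i hi => by simpa [add_assoc, add_comm 1] using hbc (1 + i) (by omega)
  have hfin := reaches_step_right (A := automaton (n + 1)) (lam := lam (n + 1))
    (q := .rgt x ⟨n - t, by omega⟩) (q' := .fin) (a := .inr true) rfl hend rfl
  simpa [lam, weight] using hscan.trans (hrgt.trans hfin)

theorem reaches_scan_fin {p : ℕ} {v : List ABCH}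
    (hv : (tape w).drop p = v.map .inl ++ [.inr true]) (hbc : ∀ x ∈ v, IsBC x) :
    (automaton n).Reaches (lam n) w (.scan, p) ((-mismatches n v : ℤ) : Fin 1 → ℤ)
      (.fin, p + v.length + 1) := by
  induction v generalizing p with
  | nil =>
    have hfin := reaches_step_right (A := automaton n) (lam := lam n) (q := .scan) (q' := .fin)
      (a := .inr true) rfl (by simpa using readAt_add_length_of_drop_tape hv) rfl
    simpa [lam, weight, mismatches] using hfin
  | cons x v ih =>
    have hbcAt : ∀ i ≤ v.length, BCAt w (p + i) := fun i hi =>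
      ⟨_, hbc _ (List.getElem_mem _), readAt_add_of_drop_tape hv (by simp; omega)⟩
    have hx : readAt w p = some (.inl x) := by simpa using readAt_add_of_drop_tape hv (i := 0)
    by_cases hn : n ≤ v.length
    · have hscan := reaches_scan_scan hx (readAt_add_of_drop_tape hv (i := n) (by simp; omega))
        fun i hi => hbcAt i (by omega)
      have hv' : (tape w).drop (p + 1) = v.map .inl ++ [.inr true] := by
        rw [← List.drop_drop, hv]; rfl
      have hrest := ih hv' fun y hy => hbc y (.tail _ hy)
      convert hscan.trans hrest using 2
      · rw [mismatches_cons_of_le hn, List.getElem?_eq_getElem (by simp; omega)]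
        split_ifs <;> simp_all
      · simp; omega
    · have hend := readAt_add_length_of_drop_tape hv
      convert reaches_scan_fin_of_lt (n := n) (t := v.length) (by omega) hbcAt
        (by simpa [add_assoc, add_comm 1] using hend) using 2
      · simp [mismatches_eq_zero_of_length_le (show (x :: v).length ≤ n by simp; omega)]
      · simp; omega

theorem reaches_fin_of_isBC {k : ℕ} {u : List ABCH} (hu : ∀ x ∈ u, IsBC x) :
    (automaton n).Reaches (lam n) (.replicate k .a ++ .hash :: u) (.init, 0)
      ((k - mismatches n u : ℤ) : Fin 1 → ℤ)
      (.fin, (List.replicate k ABCH.a ++ .hash :: u).length + 2) := by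
  set w := List.replicate k ABCH.a ++ .hash :: u
  have hinit := reaches_step_right (A := automaton n) (lam := lam n) (w := w) (q := .init)
    (q' := .countA) (a := .inr false) (m := 0) rfl (by simp [readAt]) rfl
  have hcount := reaches_countA (n := n) (w := w) k (q := 0 + 1) fun i hi => by
    simp [readAt, w, List.getElem?_append_left, hi]; omega
  have hhash := reaches_step_right (A := automaton n) (lam := lam n) (w := w) (q := .countA)
    (q' := .scan) (a := .inl .hash) (m := 0 + 1 + k) rfl (by simp [readAt, w]; omega) rfl
  have hscan := reaches_scan_fin (n := n) (w := w) (p := 0 + 1 + k + 1) (v := u)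
    (by simp [tape, w, add_comm 1 k, List.drop_append]) hu
  convert hinit.trans (hcount.trans (hhash.trans hscan)) using 2
  · push_cast [lam, weight]; ring
  · simp [w]; omega

/-- The form of the remaining input, from the letter under the head on, that state `q` relies on. -/
def Expects : (q : State n) → List ABCH → Prop
  | .init, v | .countA, v => ∃ k u, (∀ x ∈ u, IsBC x) ∧ v = .replicate k .a ++ .hash :: u
  | .fin, _ => True
  | _, v => ∀ x ∈ v, IsBC x

def ExpectsAt (w : List ABCH) (c : State n × ℕ) : Prop :=
  Expects c.1 (w.drop ((automaton n).readIdx c - 1))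

theorem next_inl_spec {q q' : State n} {y : ABCH} (hq : q ≠ .countA)
    (h : next n q (.inl y) = some q') :
    IsBC y ∧ (∀ v, Expects q v ↔ ∀ x ∈ v, IsBC x) ∧
      (∀ v, Expects q' v ↔ ∀ x ∈ v, IsBC x) := by
  rcases q with _ | _ | _ | _ | ⟨x, ⟨_ | j, hj⟩⟩ | ⟨_ | j, hj⟩ <;>
    simp [next] at h hq <;> obtain ⟨hy, rfl⟩ := h <;> (try split_ifs) <;> simp [Expects, hy]

theorem expectsAt_of_step {c c' : State n × ℕ} (h : (automaton n).step w c c')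
    (hc' : ExpectsAt w c') : ExpectsAt w c := by
  have hidx := readIdx_le_of_step h
  obtain ⟨a, hr, ht, hm⟩ := h
  obtain ⟨q, m⟩ := c
  obtain ⟨q', m'⟩ := c'
  unfold ExpectsAt at *
  rcases a with y | (_ | _)
  · rw [drop_pred_eq_cons_of_readAt_eq_inl hr]
    by_cases hq : q = .countA
    · subst hq
      cases y <;> simp [automaton, next] at ht <;> subst ht <;>
        simp [automaton, readIdx] at hm hc' ⊢ <;> subst hm <;> simp [Expects] at hc' ⊢
      · obtain ⟨k, u, hu, h⟩ := hc'
        exact ⟨k + 1, u, hu, by rw [h]; rfl⟩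
      · exact ⟨0, _, hc', rfl⟩
    · obtain ⟨hy, hq, hq'⟩ := next_inl_spec hq ht
      have hsub := (List.drop_sublist_drop_left w
        (show (automaton n).readIdx (q', m') - 1 ≤ (automaton n).readIdx (q, m) by omega)).subset
      rw [hq'] at hc'
      simp only [hq, List.mem_cons, forall_eq_or_imp]
      exact ⟨hy, fun x hx => hc' x (hsub hx)⟩
  · cases q <;> simp [automaton, next] at ht
    subst ht
    obtain rfl : m = 0 := eq_zero_of_readAt_eq_inr_false hr
    simp only [automaton, readIdx] at hm hc' ⊢
    simp_all [Expects]
  · rw [eq_length_add_one_of_readAt_eq_inr_true hr, Nat.add_sub_cancel, List.drop_length]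
    cases q <;> simp [automaton, next, Expects] at ht ⊢

theorem expectsAt_of_reaches {c c' : State n × ℕ} {v : Fin 1 → ℤ}
    (h : (automaton n).Reaches (lam n) w c v c') (hc' : ExpectsAt w c') : ExpectsAt w c := by
  induction h with
  | refl => exact hc'
  | head hs _ ih => exact expectsAt_of_step hs (ih hc')

theorem exists_eq_replicate_of_reaches_fin {v : Fin 1 → ℤ} {m : ℕ}
    (h : (automaton n).Reaches (lam n) w (.init, 0) v (.fin, m)) :
    ∃ k u, (∀ x ∈ u, IsBC x) ∧ w = .replicate k .a ++ .hash :: u :=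
  expectsAt_of_reaches h trivial

end LnAutomaton

/-- For every `n`, `L_n` is accepted by a deterministic two-way
Parikh automaton with `O(n)` states, dimension 1 and acceptance constraint `{0}`. -/
theorem Ln_accepted_by_2DPA :
    ∃ C : ℕ, ∀ n : ℕ, ∃ (Q : Type) (_ : Fintype Q) (A : TwoWayFA ABCH Q)
      (lam : Q → (ABCH ⊕ Bool) → Q → (Fin 1 → ℤ)),
        A.Deterministic ∧ Fintype.card Q ≤ C * (n + 1) ∧
          paLang A lam {v | v = 0} = Ln n := by
  refine ⟨5, fun n => ⟨LnAutomaton.State n, inferInstance, LnAutomaton.automaton n,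
    LnAutomaton.lam n, LnAutomaton.automaton_deterministic, LnAutomaton.State.card_le, ?_⟩⟩
  ext w
  rw [TwoWayFA.mem_paLang_iff]
  constructor
  · rintro ⟨_, rfl, _, rfl, _, rfl, h⟩
    obtain ⟨k, u, hu, rfl⟩ := LnAutomaton.exists_eq_replicate_of_reaches_fin h
    have hval := LnAutomaton.automaton_deterministic.reaches_value_unique h
      (LnAutomaton.reaches_fin_of_isBC hu) LnAutomaton.not_step_fin LnAutomaton.not_step_fin
    have hk : (k : ℤ) - mismatches n u = 0 := by simpa using (congrFun hval 0).symm
    exact ⟨k, u, hu, rfl, by omega⟩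
  · rintro ⟨k, u, hu, rfl, rfl⟩
    exact ⟨_, rfl, _, rfl, _, by simp, LnAutomaton.reaches_fin_of_isBC hu⟩
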